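/- Total error of the Monte Carlo dual estimator: Let V^up_{0,N_test}(x;ξ̃) := N_test^{−1} Σ_{n=1}^{N_test} sup_{a∈A^H} ( Σ_{t=0}^{H−1} ( R_t(S_t^{(n)}(a_{<t}),a_t) − η̃_{t+1}(S_t^{(n)}(a_{<t}),a_t) ) + F(S_H^{(n)}) ) be the empirical average over N_test independent trajectory drivers. Then E_x[ | V^up_{0,N_test}(x;ξ̃) − V_0^*(x) |² ]^{1/2} ≤ ( 1/√N_test + 1 ) Σ_{t=0}^{H−1} E_x[ sup_{(x',a')∈S×A} | η_{t+1}^*(x',a') − η̃_{t+1}(x',a') |² ]^{1/2}. -/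

import Mathlib

/-!
With the optimal martingale functions `η*`, the pathwise dual objective of an action sequence
telescopes to `V₀*(x) + Σ_t (Q_t - V_t)` along its path. Each term is `≤ 0` by the Bellman
equation and `≥ -δ` along a `δ`-greedy closed-loop policy, so for every driver the supremum over
action sequences is exactly `V₀*(x)`. Replacing `η*` by `η̃` moves every objective by at most
`Σ_t sup |η*_{t+1} - η̃_{t+1}|`, so each sample misses `V₀*(x)` by at most that much, pathwise.
Minkowski's inequality in `L²`, and the fact that every sample sees a single driver, then bound
the `L²` error of the average by `Σ_t ‖sup |η*_{t+1} - η̃_{t+1}|‖₂`, which is below the claimed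
bound since `1 ≤ 1/√N_test + 1`.
-/

open MeasureTheory ProbabilityTheory

/-- The controlled trajectory in the iterative-function representation:
`S_0 = x`, `S_{t+1}(a_{<t+1}) = 𝒦_{t+1}(S_t(a_{<t}), a_t, ε_{t+1})`. -/
def traj {𝒮 𝒜 E : Type*} (𝒦 : ℕ → 𝒮 → 𝒜 → E → 𝒮) (x : 𝒮)
    (a : ℕ → 𝒜) (es : ℕ → E) : ℕ → 𝒮
  | 0 => x
  | t + 1 => 𝒦 (t + 1) (traj 𝒦 x a es t) (a t) (es (t + 1))

open Finset
open scoped BigOperators ENNReal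

section Lp

variable {α β : Type*} [MeasurableSpace α] [MeasurableSpace β]

lemma lpNorm_two_eq_sqrt_integral_sq {μ : Measure α} {f : α → ℝ}
    (hf : AEStronglyMeasurable f μ) : lpNorm f 2 μ = √(∫ a, f a ^ 2 ∂μ) := by
  rw [lpNorm_eq_integral_norm_rpow_toReal two_ne_zero ENNReal.ofNat_ne_top hf,
    Real.sqrt_eq_rpow]
  norm_num [Real.norm_eq_abs, sq_abs]

lemma abs_integral_le_of_forall_abs_le {μ : Measure α}
    [IsProbabilityMeasure μ] {f : α → ℝ} {C : ℝ} (h : ∀ a, |f a| ≤ C) : |∫ a, f a ∂μ| ≤ C := by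
  simpa using norm_integral_le_of_norm_le_const (μ := μ)
    (.of_forall fun a => (Real.norm_eq_abs _).trans_le (h a))

lemma memLp_expect {ι E : Type*} [NormedAddCommGroup E] [NormedSpace ℝ E] [Module ℚ≥0 E]
    {μ : Measure α} {p : ℝ≥0∞} {s : Finset ι} {f : ι → α → E} (hf : ∀ i ∈ s, MemLp (f i) p μ) :
    MemLp (𝔼 i ∈ s, f i) p μ := by
  rw [Finset.expect, ← NNRat.cast_smul_eq_nnqsmul ℝ]
  exact (memLp_finsetSum' _ hf).const_smul _

lemma lpNorm_comp_measurePreserving {E : Type*} [NormedAddCommGroup E] {μ : Measure α}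
    {ν : Measure β} {p : ℝ≥0∞} {f : α → β} {g : β → E} (hg : AEStronglyMeasurable g ν)
    (hf : MeasurePreserving f μ ν) : lpNorm (g ∘ f) p μ = lpNorm g p ν := by
  rw [← toReal_eLpNorm hg, ← toReal_eLpNorm (hg.comp_measurePreserving hf),
    eLpNorm_comp_measurePreserving hg hf]

lemma measurePreserving_prodMap_id_eval {ι : Type*} [Fintype ι] (μ : Measure α) [SFinite μ]
    (ν : Measure β) [IsProbabilityMeasure ν] (i : ι) :
    MeasurePreserving (fun w : α × (ι → β) => (w.1, w.2 i))
      (μ.prod (Measure.pi fun _ => ν)) (μ.prod ν) :=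
  (MeasurePreserving.id μ).prod (measurePreserving_eval _ i)

theorem lpNorm_le_of_norm_le_expect_comp_eval {ι E : Type*} [Fintype ι] [NormedAddCommGroup E]
    {μ : Measure α} [SFinite μ] {ν : Measure β} [IsProbabilityMeasure ν] {p : ℝ≥0∞}
    (hp : 1 ≤ p) {f : α × β → ℝ} (hf : MemLp f p (μ.prod ν)) {g : α × (ι → β) → E}
    (hg : ∀ w, ‖g w‖ ≤ 𝔼 i, f (w.1, w.2 i)) :
    lpNorm g p (μ.prod (Measure.pi fun _ => ν)) ≤ lpNorm f p (μ.prod ν) := by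
  have hπ := measurePreserving_prodMap_id_eval μ ν (ι := ι)
  have hfi : ∀ i ∈ univ, MemLp (f ∘ fun w : α × (ι → β) => (w.1, w.2 i)) p
      (μ.prod (Measure.pi fun _ => ν)) := fun i _ => hf.comp_measurePreserving (hπ i)
  calc lpNorm g p _
      ≤ lpNorm (𝔼 i, f ∘ fun w : α × (ι → β) => (w.1, w.2 i)) p _ :=
        lpNorm_mono_real (memLp_expect hfi) fun w => by simpa using hg w
    _ ≤ 𝔼 i, lpNorm (f ∘ fun w : α × (ι → β) => (w.1, w.2 i)) p _ := lpNorm_expect_le hfi hp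
    _ = 𝔼 _i : ι, lpNorm f p (μ.prod ν) := by
        simp_rw [lpNorm_comp_measurePreserving hf.1 (hπ _)]
    _ ≤ lpNorm f p (μ.prod ν) := by
        rcases isEmpty_or_nonempty ι with hι | hι
        · simp
        · rw [Fintype.expect_const]

end Lp

lemma inv_mul_sum_sub_eq_expect_sub {N : ℕ} (hN : 0 < N) (z : Fin N → ℝ) (c : ℝ) :
    (N : ℝ)⁻¹ * (∑ n, z n) - c = 𝔼 n, (z n - c) := by
  have : Nonempty (Fin N) := Fin.pos_iff_nonempty.1 hN
  rw [expect_sub_distrib, Fintype.expect_const, Fintype.expect_eq_sum_div_card, Fintype.card_fin,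
    div_eq_inv_mul]

lemma abs_ciSup_sub_ciSup_le {ι : Type*} [Nonempty ι] {f g : ι → ℝ} {c : ℝ}
    (hg : BddAbove (Set.range g)) (h : ∀ i, |f i - g i| ≤ c) :
    |(⨆ i, f i) - ⨆ i, g i| ≤ c := by
  have hf : BddAbove (Set.range f) := by
    obtain ⟨M, hM⟩ := hg
    exact ⟨M + c, Set.forall_mem_range.2 fun i =>
      by linarith [(abs_le.1 (h i)).2, hM (Set.mem_range_self i)]⟩
  refine abs_sub_le_iff.2 ⟨sub_le_iff_le_add.2 (ciSup_le fun i => ?_),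
    sub_le_iff_le_add.2 (ciSup_le fun i => ?_)⟩
  · linarith [(abs_le.1 (h i)).2, le_ciSup hg i]
  · linarith [(abs_le.1 (h i)).1, le_ciSup hf i]

lemma abs_ciSup_abs_le {ι : Type*} [Nonempty ι] {f : ι → ℝ} {C : ℝ} (h : ∀ i, |f i| ≤ C) :
    |(⨆ i, |f i|)| ≤ C := by
  rw [abs_of_nonneg (Real.iSup_nonneg fun i => abs_nonneg _)]
  exact ciSup_le h

noncomputable section Pathwise

variable {𝒮 𝒜 E : Type*}

def feedbackTraj (𝒦 : ℕ → 𝒮 → 𝒜 → E → 𝒮) (x : 𝒮) (π : ℕ → 𝒮 → 𝒜) (es : ℕ → E) : ℕ → 𝒮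
  | 0 => x
  | t + 1 => 𝒦 (t + 1) (feedbackTraj 𝒦 x π es t) (π t (feedbackTraj 𝒦 x π es t)) (es (t + 1))

lemma traj_feedbackTraj (𝒦 : ℕ → 𝒮 → 𝒜 → E → 𝒮) (x : 𝒮) (π : ℕ → 𝒮 → 𝒜) (es : ℕ → E) :
    traj 𝒦 x (fun t => π t (feedbackTraj 𝒦 x π es t)) es = feedbackTraj 𝒦 x π es := by
  funext t
  induction t with
  | zero => rfl
  | succ t ih => simp only [traj, feedbackTraj, ih]

def dualObjective (𝒦 : ℕ → 𝒮 → 𝒜 → E → 𝒮) (R : ℕ → 𝒮 → 𝒜 → ℝ) (F : 𝒮 → ℝ) (H : ℕ)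
    (x : 𝒮) (η : ℕ → 𝒮 → 𝒜 → E → ℝ) (es : ℕ → E) (a : ℕ → 𝒜) : ℝ :=
  ∑ t ∈ range H,
      (R t (traj 𝒦 x a es t) (a t) - η (t + 1) (traj 𝒦 x a es t) (a t) (es (t + 1)))
    + F (traj 𝒦 x a es H)

lemma abs_dualObjective_sub_dualObjective_le {𝒦 : ℕ → 𝒮 → 𝒜 → E → 𝒮}
    {R : ℕ → 𝒮 → 𝒜 → ℝ} {F : 𝒮 → ℝ} {H : ℕ} {x : 𝒮} {η η' : ℕ → 𝒮 → 𝒜 → E → ℝ}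
    {es : ℕ → E} {ε : ℕ → ℝ}
    (hε : ∀ t y b, |η' (t + 1) y b (es (t + 1)) - η (t + 1) y b (es (t + 1))| ≤ ε t)
    (a : ℕ → 𝒜) :
    |dualObjective 𝒦 R F H x η es a - dualObjective 𝒦 R F H x η' es a|
      ≤ ∑ t ∈ range H, ε t := by
  rw [dualObjective, dualObjective, add_sub_add_right_eq_sub, ← sum_sub_distrib]
  refine (abs_sum_le_sum_abs _ _).trans (sum_le_sum fun t _ => ?_)
  rw [sub_sub_sub_cancel_left]
  exact hε t _ _

variable [MeasurableSpace E] (ν : Measure E) (𝒦 : ℕ → 𝒮 → 𝒜 → E → 𝒮)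

def actionValue (R : ℕ → 𝒮 → 𝒜 → ℝ) (V : ℕ → 𝒮 → ℝ) (t : ℕ) (y : 𝒮) (b : 𝒜) : ℝ :=
  R t y b + ∫ e, V (t + 1) (𝒦 (t + 1) y b e) ∂ν

structure IsBellmanSolution (R : ℕ → 𝒮 → 𝒜 → ℝ) (F : 𝒮 → ℝ) (H : ℕ) (V : ℕ → 𝒮 → ℝ) :
    Prop where
  terminal : ∀ y, V H y = F y
  bellman : ∀ t < H, ∀ y, V t y = ⨆ b, actionValue ν 𝒦 R V t y b

/-- The paper's random variable `η*_t(y, b)`, as a function of the noise `e` that drives the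
transition out of `(y, b)`. -/
def optimalMartingale (V : ℕ → 𝒮 → ℝ) (t : ℕ) (y : 𝒮) (b : 𝒜) (e : E) : ℝ :=
  V t (𝒦 t y b e) - ∫ e', V t (𝒦 t y b e') ∂ν

variable {ν 𝒦}

lemma abs_optimalMartingale_le [IsProbabilityMeasure ν] {V : ℕ → 𝒮 → ℝ} {B : ℝ}
    (hV : ∀ t y, |V t y| ≤ B) (t : ℕ) (y : 𝒮) (b : 𝒜) (e : E) :
    |optimalMartingale ν 𝒦 V t y b e| ≤ 2 * B := by
  have := abs_integral_le_of_forall_abs_le (μ := ν) fun e' => hV t (𝒦 t y b e')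
  rw [optimalMartingale]
  linarith [abs_sub (V t (𝒦 t y b e)) (∫ e', V t (𝒦 t y b e') ∂ν), hV t (𝒦 t y b e)]

lemma abs_optimalMartingale_sub_le [IsProbabilityMeasure ν] {V : ℕ → 𝒮 → ℝ}
    {η : ℕ → 𝒮 → 𝒜 → E → ℝ} {B Bη : ℝ} (hV : ∀ t y, |V t y| ≤ B)
    (hη : ∀ t y b e, |η t y b e| ≤ Bη) (t : ℕ) (y : 𝒮) (b : 𝒜) (e : E) :
    |optimalMartingale ν 𝒦 V t y b e - η t y b e| ≤ 2 * B + Bη :=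
  (abs_sub _ _).trans (add_le_add (abs_optimalMartingale_le hV t y b e) (hη t y b e))

variable (ν 𝒦) in
def martingaleApproxError (V : ℕ → 𝒮 → ℝ) (η : ℕ → 𝒮 → 𝒜 → E → ℝ) (es : ℕ → E) (t : ℕ) : ℝ :=
  ⨆ p : 𝒮 × 𝒜,
    |optimalMartingale ν 𝒦 V (t + 1) p.1 p.2 (es (t + 1)) - η (t + 1) p.1 p.2 (es (t + 1))|

lemma abs_martingaleApproxError_le [IsProbabilityMeasure ν] [Nonempty 𝒮] [Nonempty 𝒜]
    {V : ℕ → 𝒮 → ℝ} {η : ℕ → 𝒮 → 𝒜 → E → ℝ} {B Bη : ℝ} (hV : ∀ t y, |V t y| ≤ B)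
    (hη : ∀ t y b e, |η t y b e| ≤ Bη) (es : ℕ → E) (t : ℕ) :
    |martingaleApproxError ν 𝒦 V η es t| ≤ 2 * B + Bη :=
  abs_ciSup_abs_le fun _ => abs_optimalMartingale_sub_le hV hη _ _ _ _

lemma abs_optimalMartingale_sub_le_martingaleApproxError [IsProbabilityMeasure ν]
    {V : ℕ → 𝒮 → ℝ} {η : ℕ → 𝒮 → 𝒜 → E → ℝ} {B Bη : ℝ} (hV : ∀ t y, |V t y| ≤ B)
    (hη : ∀ t y b e, |η t y b e| ≤ Bη) (es : ℕ → E) (t : ℕ) (y : 𝒮) (b : 𝒜) :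
    |optimalMartingale ν 𝒦 V (t + 1) y b (es (t + 1)) - η (t + 1) y b (es (t + 1))|
      ≤ martingaleApproxError ν 𝒦 V η es t :=
  le_ciSup (f := fun p : 𝒮 × 𝒜 => |optimalMartingale ν 𝒦 V (t + 1) p.1 p.2 (es (t + 1))
      - η (t + 1) p.1 p.2 (es (t + 1))|)
    ⟨_, Set.forall_mem_range.2 fun _ => abs_optimalMartingale_sub_le hV hη _ _ _ _⟩ (y, b)

lemma bddAbove_range_actionValue [IsProbabilityMeasure ν] {R : ℕ → 𝒮 → 𝒜 → ℝ}
    {V : ℕ → 𝒮 → ℝ} {Rmax B : ℝ} (hR : ∀ t y b, |R t y b| ≤ Rmax) (hV : ∀ t y, |V t y| ≤ B)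
    (t : ℕ) (y : 𝒮) : BddAbove (Set.range (actionValue ν 𝒦 R V t y)) := by
  refine ⟨Rmax + B, Set.forall_mem_range.2 fun b => ?_⟩
  have := abs_integral_le_of_forall_abs_le (μ := ν) fun e => hV (t + 1) (𝒦 (t + 1) y b e)
  rw [actionValue]
  linarith [(abs_le.1 (hR t y b)).2, (abs_le.1 this).2]

variable {R : ℕ → 𝒮 → 𝒜 → ℝ} {F : 𝒮 → ℝ} {V : ℕ → 𝒮 → ℝ} {H : ℕ} {x : 𝒮}

lemma dualObjective_optimalMartingale (hVH : ∀ y, V H y = F y) (es : ℕ → E) (a : ℕ → 𝒜) :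
    dualObjective 𝒦 R F H x (optimalMartingale ν 𝒦 V) es a
      = V 0 x + ∑ t ∈ range H,
          (actionValue ν 𝒦 R V t (traj 𝒦 x a es t) (a t) - V t (traj 𝒦 x a es t)) := by
  have hterm : ∀ t, R t (traj 𝒦 x a es t) (a t)
        - optimalMartingale ν 𝒦 V (t + 1) (traj 𝒦 x a es t) (a t) (es (t + 1))
      = (actionValue ν 𝒦 R V t (traj 𝒦 x a es t) (a t) - V t (traj 𝒦 x a es t))
        + (V t (traj 𝒦 x a es t) - V (t + 1) (traj 𝒦 x a es (t + 1))) := fun t => by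
    simp only [optimalMartingale, actionValue, traj]
    ring
  rw [dualObjective, sum_congr rfl fun t _ => hterm t, sum_add_distrib,
    sum_range_sub' (fun t => V t (traj 𝒦 x a es t)), ← hVH]
  simp only [traj]
  ring

lemma dualObjective_optimalMartingale_le (hV : IsBellmanSolution ν 𝒦 R F H V)
    (hQ : ∀ t y, BddAbove (Set.range (actionValue ν 𝒦 R V t y))) (es : ℕ → E) (a : ℕ → 𝒜) :
    dualObjective 𝒦 R F H x (optimalMartingale ν 𝒦 V) es a ≤ V 0 x := by
  rw [dualObjective_optimalMartingale hV.terminal]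
  have : ∑ t ∈ range H,
      (actionValue ν 𝒦 R V t (traj 𝒦 x a es t) (a t) - V t (traj 𝒦 x a es t)) ≤ 0 :=
    sum_nonpos fun t ht => sub_nonpos.2 <| by
      rw [hV.bellman t (mem_range.1 ht)]
      exact le_ciSup (hQ t _) _
  linarith

/-- A closed-loop policy that is `δ`-greedy for the Bellman equation loses at most `δ` per
period. -/
lemma exists_lt_dualObjective_optimalMartingale [Nonempty 𝒜]
    (hV : IsBellmanSolution ν 𝒦 R F H V) (es : ℕ → E) {w : ℝ} (hw : w < V 0 x) :
    ∃ a, w < dualObjective 𝒦 R F H x (optimalMartingale ν 𝒦 V) es a := by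
  set δ := (V 0 x - w) / (H + 1)
  have hδ : 0 < δ := div_pos (sub_pos.2 hw) (by positivity)
  have hgreedy : ∀ t y, ∃ b, t < H → V t y - δ < actionValue ν 𝒦 R V t y b := fun t y => by
    by_cases ht : t < H
    · have : V t y - δ < ⨆ b, actionValue ν 𝒦 R V t y b := by
        rw [← hV.bellman t ht y]; linarith
      exact (exists_lt_of_lt_ciSup this).imp fun b hb _ => hb
    · exact ⟨Classical.arbitrary 𝒜, fun h => absurd h ht⟩
  choose π hπ using hgreedy
  refine ⟨fun t => π t (feedbackTraj 𝒦 x π es t), ?_⟩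
  rw [dualObjective_optimalMartingale hV.terminal, traj_feedbackTraj]
  have hsum : ∑ t ∈ range H, (-δ) ≤ ∑ t ∈ range H,
      (actionValue ν 𝒦 R V t (feedbackTraj 𝒦 x π es t) (π t (feedbackTraj 𝒦 x π es t))
        - V t (feedbackTraj 𝒦 x π es t)) :=
    sum_le_sum fun t ht => by linarith [hπ t (feedbackTraj 𝒦 x π es t) (mem_range.1 ht)]
  have hHδ : (H : ℝ) * δ < V 0 x - w := by
    rw [mul_div_assoc', div_lt_iff₀ (by positivity)]
    nlinarith
  rw [sum_const, card_range, nsmul_eq_mul, mul_neg] at hsum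
  linarith

lemma iSup_dualObjective_optimalMartingale [Nonempty 𝒜] (hV : IsBellmanSolution ν 𝒦 R F H V)
    (hQ : ∀ t y, BddAbove (Set.range (actionValue ν 𝒦 R V t y))) (es : ℕ → E) :
    ⨆ a, dualObjective 𝒦 R F H x (optimalMartingale ν 𝒦 V) es a = V 0 x :=
  ciSup_eq_of_forall_le_of_forall_lt_exists_gt
    (dualObjective_optimalMartingale_le hV hQ es)
    fun _ hw => exists_lt_dualObjective_optimalMartingale hV es hw

theorem abs_iSup_dualObjective_sub_le [Nonempty 𝒜] [IsProbabilityMeasure ν]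
    (hV : IsBellmanSolution ν 𝒦 R F H V) {Rmax B Bη : ℝ} (hR : ∀ t y b, |R t y b| ≤ Rmax)
    (hVB : ∀ t y, |V t y| ≤ B) {η : ℕ → 𝒮 → 𝒜 → E → ℝ} (hη : ∀ t y b e, |η t y b e| ≤ Bη)
    (es : ℕ → E) :
    |(⨆ a, dualObjective 𝒦 R F H x η es a) - V 0 x|
      ≤ ∑ t ∈ range H, martingaleApproxError ν 𝒦 V η es t := by
  have hQ := bddAbove_range_actionValue (ν := ν) (𝒦 := 𝒦) hR hVB
  rw [← iSup_dualObjective_optimalMartingale hV hQ es]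
  exact abs_ciSup_sub_ciSup_le
    ⟨V 0 x, Set.forall_mem_range.2 (dualObjective_optimalMartingale_le hV hQ es)⟩
    (abs_dualObjective_sub_dualObjective_le
      (abs_optimalMartingale_sub_le_martingaleApproxError hVB hη es))

end Pathwise

theorem monte_carlo_dual_estimator_error_general
    {𝒮 𝒜 : Type*} [Nonempty 𝒜]
    {E : Type*} [mE : MeasurableSpace E]
    {Ω₀ : Type*} [MeasurableSpace Ω₀]
    (P₀ : Measure Ω₀) [IsProbabilityMeasure P₀]
    (ν : Measure E) [IsProbabilityMeasure ν]
    (μE : Measure (ℕ → E)) [IsProbabilityMeasure μE]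
    (H Ntest : ℕ) (hNtest : 0 < Ntest) (x : 𝒮)
    (𝒦 : ℕ → 𝒮 → 𝒜 → E → 𝒮)
    (R : ℕ → 𝒮 → 𝒜 → ℝ) (F : 𝒮 → ℝ) (Rmax : ℝ)
    (hRb : ∀ t y a, |R t y a| ≤ Rmax)
    -- the optimal value functions (Bellman recursion), bounded
    (Vstar : ℕ → 𝒮 → ℝ)
    (hVstarH : ∀ y, Vstar H y = F y)
    (hBell : ∀ t, t < H → ∀ y,
      Vstar t y = ⨆ a : 𝒜, (R t y a + ∫ e, Vstar (t + 1) (𝒦 (t + 1) y a e) ∂ν))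
    (hVb : ∀ t y, |Vstar t y| ≤ ((H : ℝ) + 1) * Rmax)
    -- the approximate martingale functions `η̃`, bounded with zero mean
    (ηtil : ℕ → Ω₀ → 𝒮 → 𝒜 → E → ℝ) (Bη : ℝ)
    (hηb : ∀ t ω₀ y a e, |ηtil t ω₀ y a e| ≤ Bη)
    -- the pathwise dual objectives along the `n`-th independent driver
    (Zn : Fin Ntest → Ω₀ × (Fin Ntest → ℕ → E) → ℝ)
    (hZn : ∀ n w, Zn n w = ⨆ a : ℕ → 𝒜,
      (∑ t ∈ Finset.range H,
          (R t (traj 𝒦 x a (w.2 n) t) (a t)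
            - ηtil (t + 1) w.1 (traj 𝒦 x a (w.2 n) t) (a t) (w.2 n (t + 1)))
        + F (traj 𝒦 x a (w.2 n) H)))
    -- the uniform approximation errors `sup_{(x',a')} |η⋆_{t+1} − η̃_{t+1}|`
    (err : ℕ → Ω₀ × (ℕ → E) → ℝ)
    (herr : ∀ t w, err t w = ⨆ p : 𝒮 × 𝒜,
      |(Vstar (t + 1) (𝒦 (t + 1) p.1 p.2 (w.2 (t + 1)))
          - ∫ e, Vstar (t + 1) (𝒦 (t + 1) p.1 p.2 e) ∂ν)
        - ηtil (t + 1) w.1 p.1 p.2 (w.2 (t + 1))|)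
    -- measurability of the pathwise suprema
    (hZnm : ∀ n, AEStronglyMeasurable (Zn n)
      (P₀.prod (Measure.pi fun _ : Fin Ntest => μE)))
    (herrm : ∀ t, AEStronglyMeasurable (err t) (P₀.prod μE)) :
    Real.sqrt (∫ w,
        ((Ntest : ℝ)⁻¹ * (∑ n : Fin Ntest, Zn n w) - Vstar 0 x) ^ 2
      ∂(P₀.prod (Measure.pi fun _ : Fin Ntest => μE)))
      ≤ (1 / Real.sqrt Ntest + 1) *
          ∑ t ∈ Finset.range H,
            Real.sqrt (∫ w, (err t w) ^ 2 ∂(P₀.prod μE)) := by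
  have : Nonempty 𝒮 := ⟨x⟩
  have hpath : ∀ n w, |Zn n w - Vstar 0 x| ≤ ∑ t ∈ range H, err t (w.1, w.2 n) := fun n w => by
    simp only [hZn, herr]
    exact abs_iSup_dualObjective_sub_le (F := F) ⟨hVstarH, hBell⟩ hRb hVb (hηb · w.1) (w.2 n)
  have hdom : ∀ w, ‖(Ntest : ℝ)⁻¹ * (∑ n, Zn n w) - Vstar 0 x‖
      ≤ 𝔼 n, ∑ t ∈ range H, err t (w.1, w.2 n) := fun w => by
    rw [Real.norm_eq_abs, inv_mul_sum_sub_eq_expect_sub hNtest]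
    exact (abs_expect_le _ _).trans (expect_le_expect fun n _ => hpath n w)
  have hmem : ∀ t, MemLp (err t) 2 (P₀.prod μE) := fun t =>
    MemLp.of_bound (herrm t) _ (.of_forall fun w => by
      rw [Real.norm_eq_abs, herr]
      exact abs_martingaleApproxError_le hVb (hηb · w.1) w.2 t)
  have hZm : AEStronglyMeasurable (fun w => (Ntest : ℝ)⁻¹ * (∑ n, Zn n w) - Vstar 0 x)
      (P₀.prod (Measure.pi fun _ : Fin Ntest => μE)) :=
    ((aestronglyMeasurable_fun_sum _ fun n _ => hZnm n).const_mul _).sub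
      aestronglyMeasurable_const
  rw [← lpNorm_two_eq_sqrt_integral_sq hZm]
  simp_rw [← lpNorm_two_eq_sqrt_integral_sq (herrm _)]
  calc _ ≤ lpNorm (fun w => ∑ t ∈ range H, err t w) 2 (P₀.prod μE) :=
        lpNorm_le_of_norm_le_expect_comp_eval one_le_two (memLp_finsetSum _ fun t _ => hmem t) hdom
    _ ≤ ∑ t ∈ range H, lpNorm (err t) 2 (P₀.prod μE) := by
        simpa only [← Finset.sum_apply] using lpNorm_sum_le (fun t _ => hmem t) one_le_two
    _ ≤ _ := le_mul_of_one_le_left (sum_nonneg fun _ _ => lpNorm_nonneg) (by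
        simp only [one_div, le_add_iff_nonneg_left]; positivity)

/-- **Total error of the Monte Carlo dual estimator.**
For the empirical dual estimator `V₀ᵘᵖ_{0,N_test}(x; ξ̃)`, averaging the
pathwise dual objective over `N_test` independent trajectory drivers,
`E[|V₀ᵘᵖ_{0,N_test}(x;ξ̃) − V₀⋆(x)|²]^{1/2}
  ≤ (1/√N_test + 1) Σ_t E[sup_{(x',a')} |η⋆_{t+1} − η̃_{t+1}|²]^{1/2}`. -/
theorem monte_carlo_dual_estimator_error
    {𝒮 𝒜 : Type*} [Nonempty 𝒜]
    {E : Type*} [mE : MeasurableSpace E]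
    {Ω₀ : Type*} [MeasurableSpace Ω₀]
    (P₀ : Measure Ω₀) [IsProbabilityMeasure P₀]
    (ν : Measure E) [IsProbabilityMeasure ν]
    (μE : Measure (ℕ → E)) [IsProbabilityMeasure μE]
    (hcoord : ∀ n, Measure.map (fun es : ℕ → E => es n) μE = ν)
    (hindep : iIndepFun (m := fun _ : ℕ => mE) (fun n (es : ℕ → E) => es n) μE)
    (H Ntest : ℕ) (hNtest : 0 < Ntest) (x : 𝒮)
    (𝒦 : ℕ → 𝒮 → 𝒜 → E → 𝒮)
    (R : ℕ → 𝒮 → 𝒜 → ℝ) (F : 𝒮 → ℝ) (Rmax : ℝ) (hRmax : 0 ≤ Rmax)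
    (hRb : ∀ t y a, |R t y a| ≤ Rmax) (hFb : ∀ y, |F y| ≤ Rmax)
    -- the optimal value functions (Bellman recursion), bounded
    (Vstar : ℕ → 𝒮 → ℝ)
    (hVstarH : ∀ y, Vstar H y = F y)
    (hBell : ∀ t, t < H → ∀ y,
      Vstar t y = ⨆ a : 𝒜, (R t y a + ∫ e, Vstar (t + 1) (𝒦 (t + 1) y a e) ∂ν))
    (hVb : ∀ t y, |Vstar t y| ≤ ((H : ℝ) + 1) * Rmax)
    -- the approximate martingale functions `η̃`, bounded with zero mean
    (ηtil : ℕ → Ω₀ → 𝒮 → 𝒜 → E → ℝ) (Bη : ℝ)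
    (hηb : ∀ t ω₀ y a e, |ηtil t ω₀ y a e| ≤ Bη)
    (hηmean : ∀ t ω₀ y a, (∫ e, ηtil t ω₀ y a e ∂ν) = 0)
    -- the pathwise dual objectives along the `n`-th independent driver
    (Zn : Fin Ntest → Ω₀ × (Fin Ntest → ℕ → E) → ℝ)
    (hZn : ∀ n w, Zn n w = ⨆ a : ℕ → 𝒜,
      (∑ t ∈ Finset.range H,
          (R t (traj 𝒦 x a (w.2 n) t) (a t)
            - ηtil (t + 1) w.1 (traj 𝒦 x a (w.2 n) t) (a t) (w.2 n (t + 1)))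
        + F (traj 𝒦 x a (w.2 n) H)))
    -- the uniform approximation errors `sup_{(x',a')} |η⋆_{t+1} − η̃_{t+1}|`
    (err : ℕ → Ω₀ × (ℕ → E) → ℝ)
    (herr : ∀ t w, err t w = ⨆ p : 𝒮 × 𝒜,
      |(Vstar (t + 1) (𝒦 (t + 1) p.1 p.2 (w.2 (t + 1)))
          - ∫ e, Vstar (t + 1) (𝒦 (t + 1) p.1 p.2 e) ∂ν)
        - ηtil (t + 1) w.1 p.1 p.2 (w.2 (t + 1))|)
    -- measurability of the pathwise suprema
    (hZnm : ∀ n, AEStronglyMeasurable (Zn n)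
      (P₀.prod (Measure.pi fun _ : Fin Ntest => μE)))
    (herrm : ∀ t, AEStronglyMeasurable (err t) (P₀.prod μE)) :
    Real.sqrt (∫ w,
        ((Ntest : ℝ)⁻¹ * (∑ n : Fin Ntest, Zn n w) - Vstar 0 x) ^ 2
      ∂(P₀.prod (Measure.pi fun _ : Fin Ntest => μE)))
      ≤ (1 / Real.sqrt Ntest + 1) *
          ∑ t ∈ Finset.range H,
            Real.sqrt (∫ w, (err t w) ^ 2 ∂(P₀.prod μE)) :=
  monte_carlo_dual_estimator_error_general (mE := mE) P₀ ν μE H Ntest hNtest x 𝒦 R F Rmax hRb Vstar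
    hVstarH hBell hVb ηtil Bη hηb Zn hZn err herr hZnm herrm
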